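/- Let s be a solution of the p-flow on [0,T). Then the area A(t) is differentiable on [0,T) and its derivative equals minus the weighted p-affine length: A'(t) = −Ω_p^Ψ(t) = −∫₀^{2π} Ψ(θ)·s(θ,t)^((2−2p)/(p+2))·𝔯(θ,t)^(2/(p+2)) dθ for every t ∈ [0,T). -/

import Mathlib

open Real Set Filter MeasureTheory

noncomputable section

/-- Radius of curvature of the curve with support function `f`: `𝔯[f] = f'' + f`. -/
def rad (f : ℝ → ℝ) (θ : ℝ) : ℝ := iteratedDeriv 2 f θ + f θ

/-- The time domain `[0, T)`, where `0 < T ≤ ∞` is an extended real number. -/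
def timeDom (T : EReal) : Set ℝ := {t : ℝ | 0 ≤ t ∧ (t : EReal) < T}

/-- The speed `v(θ,t) = Ψ(θ) s(θ,t)^((2-2p)/(p+2)) 𝔯(θ,t)^(-p/(p+2))` of the `p`-flow. -/
def speed (p : ℝ) (Ψ : ℝ → ℝ) (s : ℝ → ℝ → ℝ) (θ t : ℝ) : ℝ :=
  Ψ θ * s θ t ^ ((2 - 2 * p) / (p + 2)) * rad (fun θ' => s θ' t) θ ^ (-p / (p + 2))

/-- `s : ℝ × [0,T) → ℝ` is a solution of the `p`-flow with weight `Ψ` on `[0, T)`,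
`0 < T ≤ ∞`: it is smooth, `π`-periodic in `θ`, positive, has positive radius of
curvature, and satisfies
`∂ₜ s = -Ψ(θ) s^((2-2p)/(p+2)) 𝔯^(-p/(p+2))`. -/
structure IsPFlow (p : ℝ) (Ψ : ℝ → ℝ) (T : EReal) (s : ℝ → ℝ → ℝ) : Prop where
  hp₁ : 1 < p
  hp₂ : p < 2
  hT : 0 < T
  hΨsmooth : ContDiff ℝ (⊤ : ℕ∞) Ψ
  hΨpos : ∀ θ, 0 < Ψ θ
  hΨper : Function.Periodic Ψ Real.pi
  hsmooth : ContDiffOn ℝ (⊤ : ℕ∞) (Function.uncurry s) (Set.univ ×ˢ timeDom T)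
  hper : ∀ t ∈ timeDom T, Function.Periodic (fun θ => s θ t) Real.pi
  hpos : ∀ θ : ℝ, ∀ t ∈ timeDom T, 0 < s θ t
  hconv : ∀ θ : ℝ, ∀ t ∈ timeDom T, 0 < rad (fun θ' => s θ' t) θ
  heq : ∀ θ : ℝ, ∀ t ∈ timeDom T,
    HasDerivWithinAt (fun τ => s θ τ) (-speed p Ψ s θ t) (timeDom T) t

/-- The area `A(t)` enclosed by the evolving curve. -/
def area (s : ℝ → ℝ → ℝ) (t : ℝ) : ℝ :=
  (1 / 2) * ∫ θ in (0:ℝ)..(2 * Real.pi), s θ t * rad (fun θ' => s θ' t) θ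

/-- The weighted `p`-affine length `Ω_p^Ψ(t)` of the evolving curve. -/
def wAffLen (p : ℝ) (Ψ : ℝ → ℝ) (s : ℝ → ℝ → ℝ) (t : ℝ) : ℝ :=
  ∫ θ in (0:ℝ)..(2 * Real.pi),
    Ψ θ * s θ t ^ ((2 - 2 * p) / (p + 2)) * rad (fun θ' => s θ' t) θ ^ ((2:ℝ) / (p + 2))

/-! The operator `f ↦ 𝔯[f] = f'' + f` is symmetric on `π`-periodic functions: `g 𝔯[f] - f 𝔯[g]`
is the derivative of the periodic function `g f' - f g'`. Hence
`A(t') - A(t) = ½ ∫ (s(·,t') - s(·,t)) (𝔯(·,t) + 𝔯(·,t'))`. Dividing by `t' - t` and letting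
`t' → t` (dominated convergence: by the mean value theorem the difference quotients of `s` are
bounded by a bound of the speed on a compact set) gives `A'(t) = -∫ v 𝔯`, and
`v 𝔯 = Ψ s^((2-2p)/(p+2)) 𝔯^(2/(p+2))` is the density of `Ω_p^Ψ`. -/

open Topology Interval

theorem Function.Periodic.deriv {𝕜 F : Type*} [NontriviallyNormedField 𝕜] [NormedAddCommGroup F]
    [NormedSpace 𝕜 F] {f : 𝕜 → F} {c : 𝕜} (hf : Function.Periodic f c) :
    Function.Periodic (deriv f) c := fun x => by
  rw [← deriv_comp_add_const, show (fun y => f (y + c)) = f from funext hf]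

theorem HasDerivWithinAt.mul_continuousWithinAt_of_eq_zero {𝕜 : Type*} [NontriviallyNormedField 𝕜]
    {f g : 𝕜 → 𝕜} {f' : 𝕜} {D : Set 𝕜} {t : 𝕜} (hf : HasDerivWithinAt f f' D t) (hf0 : f t = 0)
    (hg : ContinuousWithinAt g D t) :
    HasDerivWithinAt (fun x => f x * g x) (f' * g t) D t := by
  rw [hasDerivWithinAt_iff_tendsto_slope] at hf ⊢
  refine (hf.mul (hg.tendsto.mono_left (nhdsWithin_mono t sdiff_subset))).congr fun x => ?_
  simp only [slope_def_field, hf0]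
  ring

theorem hasDerivWithinAt_intervalIntegral_of_lipschitz {E : Type*} [NormedAddCommGroup E]
    [NormedSpace ℝ E] {F : ℝ → ℝ → E} {F' : ℝ → E} {D : Set ℝ} {t a b M : ℝ}
    (hF_int : ∀ᶠ t' in 𝓝[D] t, IntervalIntegrable (F t') volume a b)
    (hFt_int : IntervalIntegrable (F t) volume a b)
    (h_lip : ∀ᶠ t' in 𝓝[D] t, ∀ θ ∈ Ι a b, ‖F t' θ - F t θ‖ ≤ M * |t' - t|)
    (hF' : ∀ θ ∈ Ι a b, HasDerivWithinAt (fun t' => F t' θ) (F' θ) D t) :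
    HasDerivWithinAt (fun t' => ∫ θ in a..b, F t' θ) (∫ θ in a..b, F' θ) D t := by
  rw [hasDerivWithinAt_iff_tendsto_slope]
  have h_int : ∀ᶠ t' in 𝓝[D \ {t}] t, IntervalIntegrable (F t') volume a b :=
    nhdsWithin_mono t sdiff_subset hF_int
  have h_slope : (fun t' => ∫ θ in a..b, slope (fun τ => F τ θ) t t')
      =ᶠ[𝓝[D \ {t}] t] slope (fun t' => ∫ θ in a..b, F t' θ) t := by
    filter_upwards [h_int] with t' ht'
    simp only [slope_def_module]
    rw [intervalIntegral.integral_smul, intervalIntegral.integral_sub ht' hFt_int]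
  refine Tendsto.congr' h_slope
    (intervalIntegral.tendsto_integral_filter_of_dominated_convergence (fun _ => M) ?_ ?_
      intervalIntegrable_const ?_)
  · filter_upwards [h_int] with t' ht'
    exact ((ht'.sub hFt_int).aestronglyMeasurable_restrict_uIoc).const_smul _
  · filter_upwards [nhdsWithin_mono t sdiff_subset h_lip, self_mem_nhdsWithin]
      with t' ht' hne
    refine ae_of_all _ fun θ hθ => ?_
    rw [slope_def_module, norm_smul, norm_inv, Real.norm_eq_abs,
      inv_mul_le_iff₀ (abs_pos.2 (sub_ne_zero.2 hne.2)), mul_comm]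
    exact ht' θ hθ
  · exact ae_of_all _ fun θ hθ => hasDerivWithinAt_iff_tendsto_slope.1 (hF' θ hθ)

section Slices

variable {E : Type*} [NormedAddCommGroup E] [NormedSpace ℝ E]

theorem DifferentiableWithinAt.hasDerivAt_slice {f : ℝ × ℝ → E} {D : Set ℝ} {θ t : ℝ}
    (hf : DifferentiableWithinAt ℝ f (univ ×ˢ D) (θ, t)) (ht : t ∈ D) :
    HasDerivAt (fun θ' => f (θ', t)) (fderivWithin ℝ f (univ ×ˢ D) (θ, t) (1, 0)) θ := by
  have hι : HasFDerivAt (fun θ' : ℝ => (θ', t))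
      ((ContinuousLinearMap.id ℝ ℝ).prod (0 : ℝ →L[ℝ] ℝ)) θ :=
    (hasFDerivAt_id θ).prodMk (hasFDerivAt_const t θ)
  have hmaps : MapsTo (fun θ' : ℝ => (θ', t)) univ (univ ×ˢ D) := fun _ _ => ⟨trivial, ht⟩
  have h := hf.hasFDerivWithinAt.comp θ hι.hasFDerivWithinAt hmaps
  rw [hasFDerivWithinAt_univ] at h
  have h' := h.hasDerivAt
  simp only [ContinuousLinearMap.coe_comp, Function.comp_apply, ContinuousLinearMap.prod_apply,
    ContinuousLinearMap.coe_id', id_eq, zero_apply] at h'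
  exact h'

theorem ContDiffOn.contDiff_slice {n : WithTop ℕ∞} {s : ℝ → ℝ → E} {D : Set ℝ} {t : ℝ}
    (hs : ContDiffOn ℝ n (Function.uncurry s) (univ ×ˢ D)) (ht : t ∈ D) :
    ContDiff ℝ n (fun θ => s θ t) := by
  rw [← contDiffOn_univ]
  exact hs.comp (contDiff_id.prodMk contDiff_const).contDiffOn fun _ _ => ⟨trivial, ht⟩

theorem ContDiffOn.iteratedDeriv_slice {s : ℝ → ℝ → E} {D : Set ℝ} (hD : UniqueDiffOn ℝ D)
    (hs : ContDiffOn ℝ (⊤ : ℕ∞) (Function.uncurry s) (univ ×ˢ D)) (n : ℕ) :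
    ContDiffOn ℝ (⊤ : ℕ∞) (fun q : ℝ × ℝ => iteratedDeriv n (fun θ => s θ q.2) q.1)
      (univ ×ˢ D) := by
  induction n with
  | zero =>
    simp only [iteratedDeriv_zero]
    exact hs
  | succ n ih =>
    have hU : UniqueDiffOn ℝ (univ ×ˢ D) := (uniqueDiffOn_univ (𝕜 := ℝ) (E := ℝ)).prod hD
    refine ((ih.fderivWithin hU (by simp)).clm_apply
      (contDiffOn_const (c := ((1, 0) : ℝ × ℝ)))).congr fun q hq => ?_
    rw [iteratedDeriv_succ]
    exact ((ih.differentiableOn (by simp) q hq).hasDerivAt_slice hq.2).deriv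

end Slices

theorem continuous_rad {f : ℝ → ℝ} (hf : ContDiff ℝ 2 f) : Continuous (rad f) :=
  (hf.continuous_iteratedDeriv 2 le_rfl).add hf.continuous

theorem hasDerivAt_mul_deriv_sub_mul_deriv {f g : ℝ → ℝ} (hf : ContDiff ℝ 2 f)
    (hg : ContDiff ℝ 2 g) (θ : ℝ) :
    HasDerivAt (fun x => g x * deriv f x - f x * deriv g x)
      (g θ * rad f θ - f θ * rad g θ) θ := by
  have hf' := (contDiff_succ_iff_deriv.1 hf).2.2.differentiable one_ne_zero θ
  have hg' := (contDiff_succ_iff_deriv.1 hg).2.2.differentiable one_ne_zero θ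
  have h := ((hg.differentiable two_ne_zero θ).hasDerivAt.mul hf'.hasDerivAt).sub
    ((hf.differentiable two_ne_zero θ).hasDerivAt.mul hg'.hasDerivAt)
  refine h.congr_deriv ?_
  simp only [rad, iteratedDeriv_succ, iteratedDeriv_zero]
  ring

theorem integral_mul_rad_sub_mul_rad_eq_zero {f g : ℝ → ℝ} {c : ℝ} (hf : ContDiff ℝ 2 f)
    (hg : ContDiff ℝ 2 g) (hfc : Function.Periodic f c) (hgc : Function.Periodic g c) (a : ℝ) :
    ∫ θ in a..a + c, (g θ * rad f θ - f θ * rad g θ) = 0 := by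
  rw [intervalIntegral.integral_eq_sub_of_hasDerivAt
    (fun θ _ => hasDerivAt_mul_deriv_sub_mul_deriv hf hg θ)
    (((hg.continuous.mul (continuous_rad hf)).sub
      (hf.continuous.mul (continuous_rad hg))).intervalIntegrable _ _)]
  simp only [hfc a, hgc a, hfc.deriv a, hgc.deriv a, sub_self]

theorem integral_mul_rad_sub_integral_mul_rad {f g : ℝ → ℝ} {c : ℝ} (hf : ContDiff ℝ 2 f)
    (hg : ContDiff ℝ 2 g) (hfc : Function.Periodic f c) (hgc : Function.Periodic g c) (a : ℝ) :
    (∫ θ in a..a + c, g θ * rad g θ) - ∫ θ in a..a + c, f θ * rad f θ =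
      ∫ θ in a..a + c, (g θ - f θ) * (rad f θ + rad g θ) := by
  have hint {u v : ℝ → ℝ} (hu : ContDiff ℝ 2 u) (hv : ContDiff ℝ 2 v) :
      IntervalIntegrable (fun θ => u θ * rad v θ) volume a (a + c) :=
    (hu.continuous.mul (continuous_rad hv)).intervalIntegrable _ _
  calc (∫ θ in a..a + c, g θ * rad g θ) - ∫ θ in a..a + c, f θ * rad f θ
      = (∫ θ in a..a + c, (g θ * rad g θ - f θ * rad f θ)) +
          ∫ θ in a..a + c, (g θ * rad f θ - f θ * rad g θ) := by
        rw [integral_mul_rad_sub_mul_rad_eq_zero hf hg hfc hgc, add_zero,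
          intervalIntegral.integral_sub (hint hg hg) (hint hf hf)]
    _ = ∫ θ in a..a + c, (g θ - f θ) * (rad f θ + rad g θ) := by
        rw [← intervalIntegral.integral_add ((hint hg hg).sub (hint hf hf))
          ((hint hg hf).sub (hint hf hg))]
        congr 1
        ext θ
        ring

theorem convex_timeDom (T : EReal) : Convex ℝ (timeDom T) :=
  (convex_Ici 0).inter <| OrdConnected.convex
    ⟨fun _ _ _ hy _ hz => lt_of_le_of_lt (EReal.coe_le_coe_iff.2 hz.2) hy⟩

theorem exists_Icc_subset_timeDom {T : EReal} {t : ℝ} (ht : t ∈ timeDom T) :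
    ∃ b, t < b ∧ Icc 0 b ⊆ timeDom T := by
  obtain ⟨b, htb, hbT⟩ := EReal.lt_iff_exists_real_btwn.1 ht.2
  exact ⟨b, EReal.coe_lt_coe_iff.1 htb, fun x hx =>
    ⟨hx.1, lt_of_le_of_lt (EReal.coe_le_coe_iff.2 hx.2) hbT⟩⟩

theorem uniqueDiffOn_timeDom {T : EReal} (hT : 0 < T) : UniqueDiffOn ℝ (timeDom T) := by
  obtain ⟨b, hb, hsub⟩ := exists_Icc_subset_timeDom (T := T) ⟨le_rfl, hT⟩
  refine uniqueDiffOn_convex (convex_timeDom T) ((nonempty_Ioo.2 hb).mono ?_)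
  exact interior_Icc (a := (0 : ℝ)) ▸ interior_mono hsub

namespace IsPFlow

variable {p : ℝ} {Ψ : ℝ → ℝ} {T : EReal} {s : ℝ → ℝ → ℝ}

theorem continuousOn_rad (hflow : IsPFlow p Ψ T s) :
    ContinuousOn (fun q : ℝ × ℝ => rad (fun θ => s θ q.2) q.1) (univ ×ˢ timeDom T) :=
  ((hflow.hsmooth.iteratedDeriv_slice (uniqueDiffOn_timeDom hflow.hT) 2).continuousOn).add
    hflow.hsmooth.continuousOn

theorem continuousOn_speed (hflow : IsPFlow p Ψ T s) :
    ContinuousOn (fun q : ℝ × ℝ => speed p Ψ s q.1 q.2) (univ ×ˢ timeDom T) :=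
  ((hflow.hΨsmooth.continuous.comp continuous_fst).continuousOn.mul
    (hflow.hsmooth.continuousOn.rpow_const fun _ hq => Or.inl (hflow.hpos _ _ hq.2).ne')).mul
    (hflow.continuousOn_rad.rpow_const fun _ hq => Or.inl (hflow.hconv _ _ hq.2).ne')

theorem abs_sub_le_of_abs_speed_le (hflow : IsPFlow p Ψ T s) {θ a b M t t' : ℝ}
    (hsub : Icc a b ⊆ timeDom T) (hM : ∀ τ ∈ Icc a b, |speed p Ψ s θ τ| ≤ M)
    (ht : t ∈ Icc a b) (ht' : t' ∈ Icc a b) :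
    |s θ t' - s θ t| ≤ M * |t' - t| := by
  simpa [Real.norm_eq_abs] using (convex_Icc a b).norm_image_sub_le_of_norm_hasDerivWithin_le
    (fun τ hτ => (hflow.heq θ τ (hsub hτ)).mono hsub)
    (fun τ hτ => by simpa using hM τ hτ) ht ht'

theorem periodic_two_pi (hflow : IsPFlow p Ψ T s) {t : ℝ} (ht : t ∈ timeDom T) :
    Function.Periodic (fun θ => s θ t) (2 * π) := by
  rw [two_mul]
  exact (hflow.hper t ht).add_period (hflow.hper t ht)

theorem contDiff_slice (hflow : IsPFlow p Ψ T s) {t : ℝ} (ht : t ∈ timeDom T) :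
    ContDiff ℝ 2 (fun θ => s θ t) :=
  (hflow.hsmooth.contDiff_slice ht).of_le (by norm_cast)

theorem area_sub (hflow : IsPFlow p Ψ T s) {t₁ t₂ : ℝ} (ht₁ : t₁ ∈ timeDom T)
    (ht₂ : t₂ ∈ timeDom T) :
    area s t₂ - area s t₁ = 1 / 2 * ∫ θ in (0 : ℝ)..2 * π,
      (s θ t₂ - s θ t₁) * (rad (fun θ' => s θ' t₁) θ + rad (fun θ' => s θ' t₂) θ) := by
  have h := integral_mul_rad_sub_integral_mul_rad (hflow.contDiff_slice ht₁)
    (hflow.contDiff_slice ht₂)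
    (hflow.periodic_two_pi ht₁) (hflow.periodic_two_pi ht₂) 0
  rw [zero_add] at h
  rw [area, area, ← mul_sub, h]

theorem exists_abs_sub_mul_rad_add_le (hflow : IsPFlow p Ψ T s) {t : ℝ} (ht : t ∈ timeDom T)
    {K : Set ℝ} (hK : IsCompact K) :
    ∃ M, ∀ᶠ t' in 𝓝[timeDom T] t, ∀ θ ∈ K,
      |(s θ t' - s θ t) * (rad (fun θ' => s θ' t) θ + rad (fun θ' => s θ' t') θ)| ≤
        M * |t' - t| := by
  obtain ⟨b, htb, hsub⟩ := exists_Icc_subset_timeDom ht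
  have hKb : K ×ˢ Icc 0 b ⊆ univ ×ˢ timeDom T := prod_mono (subset_univ K) hsub
  obtain ⟨V, hV⟩ := (hK.prod isCompact_Icc).exists_bound_of_continuousOn
    (hflow.continuousOn_speed.mono hKb)
  obtain ⟨C, hC⟩ := (hK.prod isCompact_Icc).exists_bound_of_continuousOn
    (hflow.continuousOn_rad.mono hKb)
  have htI : t ∈ Icc 0 b := ⟨ht.1, htb.le⟩
  have hnhds : Icc 0 b ∈ 𝓝[timeDom T] t :=
    mem_nhdsWithin.2 ⟨Iio b, isOpen_Iio, htb, fun x hx => ⟨hx.2.1, hx.1.le⟩⟩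
  refine ⟨V * (C + C), ?_⟩
  filter_upwards [hnhds] with t' ht' θ hθ
  have hs := hflow.abs_sub_le_of_abs_speed_le hsub (fun τ hτ => hV (θ, τ) ⟨hθ, hτ⟩) htI ht'
  have hr := (abs_add_le _ _).trans (add_le_add (hC (θ, t) ⟨hθ, htI⟩) (hC (θ, t') ⟨hθ, ht'⟩))
  rw [abs_mul, mul_right_comm]
  exact mul_le_mul hs hr (abs_nonneg _) ((abs_nonneg _).trans hs)

theorem hasDerivWithinAt_sub_mul_rad_add (hflow : IsPFlow p Ψ T s) {t : ℝ}
    (ht : t ∈ timeDom T) (θ : ℝ) :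
    HasDerivWithinAt
      (fun t' => (s θ t' - s θ t) * (rad (fun θ' => s θ' t) θ + rad (fun θ' => s θ' t') θ))
      (-speed p Ψ s θ t * (rad (fun θ' => s θ' t) θ + rad (fun θ' => s θ' t) θ))
      (timeDom T) t :=
  ((hflow.heq θ t ht).sub_const (s θ t)).mul_continuousWithinAt_of_eq_zero (sub_self _)
    (continuousWithinAt_const.add ((hflow.continuousOn_rad (θ, t) ⟨trivial, ht⟩).comp
      (continuous_const.prodMk continuous_id).continuousWithinAt fun _ h => ⟨trivial, h⟩))

theorem hasDerivWithinAt_area (hflow : IsPFlow p Ψ T s) {t : ℝ} (ht : t ∈ timeDom T) :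
    HasDerivWithinAt (area s)
      (-∫ θ in (0 : ℝ)..2 * π, speed p Ψ s θ t * rad (fun θ' => s θ' t) θ) (timeDom T) t := by
  obtain ⟨M, hM⟩ :=
    hflow.exists_abs_sub_mul_rad_add_le ht (isCompact_uIcc (a := 0) (b := 2 * π))
  have hint : ∀ t' ∈ timeDom T, IntervalIntegrable
      (fun θ => (s θ t' - s θ t) * (rad (fun θ' => s θ' t) θ + rad (fun θ' => s θ' t') θ))
      volume 0 (2 * π) := fun t' ht' =>
    (((hflow.contDiff_slice ht').continuous.sub (hflow.contDiff_slice ht).continuous).mul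
      ((continuous_rad (hflow.contDiff_slice ht)).add
        (continuous_rad (hflow.contDiff_slice ht')))).intervalIntegrable _ _
  have hderiv := hasDerivWithinAt_intervalIntegral_of_lipschitz
    (eventually_mem_nhdsWithin.mono hint) (hint t ht)
    (hM.mono fun t' h θ hθ => by
      simpa only [sub_self, zero_mul, sub_zero, Real.norm_eq_abs] using h θ (uIoc_subset_uIcc hθ))
    (fun θ _ => hflow.hasDerivWithinAt_sub_mul_rad_add ht θ)
  refine (((hderiv.const_mul (1 / 2)).const_add (area s t)).congr_of_mem (fun t' ht' => ?_) ht)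
    |>.congr_deriv ?_
  · rw [← hflow.area_sub ht ht']
    ring
  · rw [← intervalIntegral.integral_const_mul, ← intervalIntegral.integral_neg]
    congr 1
    ext θ
    ring

theorem speed_mul_rad (hflow : IsPFlow p Ψ T s) {t : ℝ} (ht : t ∈ timeDom T) (θ : ℝ) :
    speed p Ψ s θ t * rad (fun θ' => s θ' t) θ =
      Ψ θ * s θ t ^ ((2 - 2 * p) / (p + 2)) * rad (fun θ' => s θ' t) θ ^ ((2 : ℝ) / (p + 2)) := by
  have hp : p + 2 ≠ 0 := by linarith [hflow.hp₁]
  have hexp : (2 : ℝ) / (p + 2) = -p / (p + 2) + 1 := by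
    field_simp
    ring
  rw [speed, hexp, Real.rpow_add_one (hflow.hconv θ t ht).ne', mul_assoc]

end IsPFlow

/-- Along the `p`-flow, the enclosed area is differentiable and
`A'(t) = -Ω_p^Ψ(t)`. -/
theorem area_deriv (p : ℝ) (Ψ : ℝ → ℝ) (T : EReal) (s : ℝ → ℝ → ℝ)
    (hflow : IsPFlow p Ψ T s) :
    ∀ t ∈ timeDom T,
      HasDerivWithinAt (area s) (-(wAffLen p Ψ s t)) (timeDom T) t := by
  intro t ht
  have h := hflow.hasDerivWithinAt_area ht
  simp_rw [hflow.speed_mul_rad ht] at h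
  exact h
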